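/- Let Δ be a self-adjoint positive semidefinite linear operator on a finite-dimensional real inner product space V, and let ξ : ℝ → V solve the linear ODE dξ/dt = -αΔξ with α > 0 and initial condition ξ(0) = ξ_0. Then ξ(t) converges as t → ∞ to the orthogonal projection of ξ_0 onto ker Δ. -/

import Mathlib

/-!
Subtracting the projection `P` of `ξ 0` onto `ker Δ` leaves a solution `η = ξ - P` of the same
equation, and `η` stays in `(ker Δ)ᗮ` because `Δ` is symmetric. On `(ker Δ)ᗮ` the positive
semidefinite form `⟪v, Δ v⟫` vanishes only at `0`, so by compactness of the unit sphere it
dominates `c * ‖v‖ ^ 2` for some `c > 0`. Hence `d/dt ‖η‖² ≤ -2αc ‖η‖²`, and Grönwall's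
inequality makes `η` decay exponentially.
-/

open scoped RealInnerProductSpace
open Filter Topology

theorem le_mul_exp_of_hasDerivAt_le_mul {f f' : ℝ → ℝ} {K : ℝ}
    (hf : ∀ t, HasDerivAt f (f' t) t) (hbound : ∀ t, f' t ≤ K * f t) {t : ℝ} (ht : 0 ≤ t) :
    f t ≤ f 0 * Real.exp (K * t) := by
  have h := le_gronwallBound_of_liminf_deriv_right_le (b := t) (ε := 0)
    (fun s _ => (hf s).continuousAt.continuousWithinAt)
    (fun s _ _ hr => (hf s).hasDerivWithinAt.liminf_right_slope_le hr) le_rfl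
    (fun s _ => by simpa using hbound s) t ⟨ht, le_rfl⟩
  simpa [gronwallBound_ε0] using h

namespace LinearMap

variable {V : Type*} [NormedAddCommGroup V] [InnerProductSpace ℝ V] {T : V →ₗ[ℝ] V}
  {ξ : ℝ → V}

theorem IsPositive.apply_eq_zero_of_inner_map_self_eq_zero (hT : T.IsPositive) {v : V}
    (hv : ⟪v, T v⟫ = 0) : T v = 0 := by
  have hquad : ∀ t : ℝ, 0 ≤ ⟪T v, T (T v)⟫ * (t * t) + 2 * ‖T v‖ ^ 2 * t + 0 := fun t => by
    have h := hT.inner_nonneg_right (v + t • T v)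
    simp only [map_add, map_smul, inner_add_left, inner_add_right, real_inner_smul_left,
      real_inner_smul_right, hv] at h
    rw [← hT.isSymmetric v (T v), real_inner_self_eq_norm_sq] at h
    linarith
  have h := discrim_le_zero hquad
  rw [discrim] at h
  have h2 : (2 * ‖T v‖ ^ 2) ^ 2 = 0 := le_antisymm (by simpa using h) (sq_nonneg _)
  simpa using h2

theorem IsSymmetric.mem_orthogonal_ker_of_hasDerivAt (hT : T.IsSymmetric)
    (hξ : ∀ t, HasDerivAt ξ (-T (ξ t)) t) (h0 : ξ 0 ∈ (ker T)ᗮ) (t : ℝ) : ξ t ∈ (ker T)ᗮ := by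
  rw [Submodule.mem_orthogonal]
  intro k hk
  have hconst : ∀ s, HasDerivAt (fun s => ⟪k, ξ s⟫) 0 s := fun s => by
    simpa [← hT k, mem_ker.mp hk] using (hasDerivAt_const s k).inner ℝ (hξ s)
  rw [is_const_of_deriv_eq_zero (fun s => (hconst s).differentiableAt)
    (fun s => (hconst s).deriv) t 0]
  exact Submodule.inner_right_of_mem_orthogonal hk h0

variable [FiniteDimensional ℝ V]

theorem IsPositive.exists_pos_mul_norm_sq_le_inner_map_self (hT : T.IsPositive) :
    ∃ c > 0, ∀ v ∈ (ker T)ᗮ, c * ‖v‖ ^ 2 ≤ ⟪v, T v⟫ := by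
  set S := Metric.sphere (0 : V) 1 ∩ (ker T)ᗮ
  have hscale : ∀ c, (∀ w ∈ S, c ≤ ⟪w, T w⟫) → ∀ v ∈ (ker T)ᗮ, c * ‖v‖ ^ 2 ≤ ⟪v, T v⟫ := by
    intro c hc v hv
    rcases eq_or_ne v 0 with rfl | hv0
    · simp
    have hnorm : ‖v‖ ≠ 0 := norm_ne_zero_iff.mpr hv0
    have hw : ‖v‖⁻¹ • v ∈ S :=
      ⟨by simp [norm_smul, hnorm], (ker T)ᗮ.smul_mem _ hv⟩
    have h := hc _ hw
    rw [map_smul, real_inner_smul_left, real_inner_smul_right, ← mul_assoc, ← sq, inv_pow,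
      ← div_eq_inv_mul, le_div_iff₀ (by positivity)] at h
    exact h
  rcases S.eq_empty_or_nonempty with hS | hS
  · exact ⟨1, one_pos, hscale 1 (by simp [hS])⟩
  have hcompact : IsCompact S :=
    (isCompact_sphere 0 1).inter_right (Submodule.closed_of_finiteDimensional _)
  have hcont : Continuous fun v => ⟪v, T v⟫ :=
    continuous_id.inner T.continuous_of_finiteDimensional
  obtain ⟨w₀, ⟨hw₀, hw₀K⟩, hmin⟩ := hcompact.exists_isMinOn hS hcont.continuousOn
  refine ⟨⟪w₀, T w₀⟫, (hT.inner_nonneg_right w₀).lt_of_ne fun h => ?_, hscale _ hmin⟩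
  have hw₀ker : w₀ ∈ ker T := hT.apply_eq_zero_of_inner_map_self_eq_zero h.symm
  have : w₀ = 0 := inner_self_eq_zero.mp (Submodule.inner_right_of_mem_orthogonal hw₀ker hw₀K)
  simp [this] at hw₀

theorem IsPositive.tendsto_zero_of_hasDerivAt (hT : T.IsPositive)
    (hξ : ∀ t, HasDerivAt ξ (-T (ξ t)) t) (h0 : ξ 0 ∈ (ker T)ᗮ) :
    Tendsto ξ atTop (𝓝 0) := by
  obtain ⟨c, hc, hcoercive⟩ := hT.exists_pos_mul_norm_sq_le_inner_map_self
  have hdecay : ∀ t, 0 ≤ t → ‖ξ t‖ ^ 2 ≤ ‖ξ 0‖ ^ 2 * Real.exp (-(2 * c) * t) := by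
    refine fun t ht => le_mul_exp_of_hasDerivAt_le_mul (fun s => (hξ s).norm_sq) (fun s => ?_) ht
    have := hcoercive _ (hT.isSymmetric.mem_orthogonal_ker_of_hasDerivAt hξ h0 s)
    rw [inner_neg_right]
    linarith
  have hbound : Tendsto (fun t => ‖ξ 0‖ ^ 2 * Real.exp (-(2 * c) * t)) atTop (𝓝 0) := by
    simpa using (Real.tendsto_exp_atBot.comp
      (tendsto_id.const_mul_atTop_of_neg (by linarith : -(2 * c) < 0))).const_mul (‖ξ 0‖ ^ 2)
  have hsq : Tendsto (fun t => ‖ξ t‖ ^ 2) atTop (𝓝 0) :=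
    squeeze_zero' (.of_forall fun _ => by positivity) (eventually_atTop.mpr ⟨0, hdecay⟩) hbound
  exact tendsto_zero_iff_norm_tendsto_zero.mpr (by simpa using hsq.sqrt)

theorem IsPositive.tendsto_orthogonalProjectionOnto_ker_of_hasDerivAt (hT : T.IsPositive)
    (hξ : ∀ t, HasDerivAt ξ (-T (ξ t)) t) :
    Tendsto ξ atTop (𝓝 ((ker T).orthogonalProjectionOnto (ξ 0) : V)) := by
  set P : V := ↑((ker T).orthogonalProjectionOnto (ξ 0))
  have hP : T P = 0 := ((ker T).orthogonalProjectionOnto (ξ 0)).2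
  have hη : ∀ t, HasDerivAt (fun s => ξ s - P) (-T (ξ t - P)) t := fun t => by
    simpa [hP] using (hξ t).sub_const P
  have h0 : ξ 0 - P ∈ (ker T)ᗮ := (ker T).sub_starProjection_mem_orthogonal (ξ 0)
  simpa using (hT.tendsto_zero_of_hasDerivAt hη h0).add_const P

end LinearMap

/-- Solutions of the heat equation `dξ/dt = -αΔξ` for a self-adjoint positive
semidefinite operator `Δ` converge to the orthogonal projection of the initial
condition onto `ker Δ`. -/
theorem heat_flow_tendsto_orthogonalProjection_ker
    {V : Type} [NormedAddCommGroup V] [InnerProductSpace ℝ V] [FiniteDimensional ℝ V]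
    (Δ : V →ₗ[ℝ] V) (hsa : LinearMap.IsSymmetric Δ) (hpsd : ∀ v : V, 0 ≤ ⟪v, Δ v⟫)
    (α : ℝ) (hα : 0 < α) (ξ : ℝ → V) (ξ₀ : V) (hinit : ξ 0 = ξ₀)
    (hode : ∀ t : ℝ, HasDerivAt ξ (-(α • Δ (ξ t))) t) :
    Filter.Tendsto ξ Filter.atTop
      (nhds (Submodule.orthogonalProjectionOnto (LinearMap.ker Δ) ξ₀ : V)) := by
  subst hinit
  have hΔ : Δ.IsPositive := (Δ.isPositive_iff).mpr ⟨hsa, fun v => real_inner_comm v _ ▸ hpsd v⟩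
  rw [← LinearMap.ker_smul Δ α hα.ne']
  exact (hΔ.smul_of_nonneg hα.le).tendsto_orthogonalProjectionOnto_ker_of_hasDerivAt hode
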